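/- arXiv:2111.04030 — 2 statements merged into one kernel-verified Lean document; each statement's English description precedes it below -/
import Mathlib

section
/- With W_x the set of weak subsequence limits of the empirical shift measures of x ∈ {0,1}^∞, the finite-state dimension satisfies dim_FS(x) = inf_{μ ∈ W_x} inf_l H_l(μ)/l, i.e., the limit inferior in the lower average entropy can be replaced by an infimum over block lengths. -/
/-!
Cylinders are clopen, so weak convergence of the empirical measures along a subsequence forces
convergence of every cylinder mass (portmanteau); and the sliding frequency of a word of length `l`
in `x₀ … x_{n-1}` differs from the empirical mass of its cylinder by `O(l / n)`. Hence along a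
subsequence defining `μ ∈ W_x` the sliding block entropies `H_l(x₀ … x_{n-1})` tend to `H_l(μ) / l`,
which bounds their liminf from above. Conversely, a subsequence realising that liminf has, by
compactness of the space of probability measures on Cantor space, a further subsequence converging
weakly to some `μ ∈ W_x`, and then `H_l(μ) / l` equals the liminf.
-/

open MeasureTheory Filter Topology Real
open scoped ENNReal

noncomputable section

abbrev Cantor := ℕ → Bool

/-- `j`-fold left shift of a binary sequence. -/
def shiftk (x : Cantor) (j : ℕ) : Cantor := fun i => x (i + j)

/-- the left shift `T`. -/
def Tshift (x : Cantor) : Cantor := fun i => x (i + 1)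

/-- binary evaluation map `v`. -/
noncomputable def eval (x : Cantor) : ℝ := ∑' i : ℕ, if x i then ((2:ℝ) ^ (i + 1))⁻¹ else 0

noncomputable def negMulLog2 (p : ℝ) : ℝ := - p * Real.logb 2 p

/-- sliding count probability of a word `w` of length `l` in the prefix `x_0^{n-1}`. -/
noncomputable def slidingP (x : Cantor) (n l : ℕ) (w : Fin l → Bool) : ℝ :=
  (((Finset.range (n - l + 1)).filter (fun i => ∀ j : Fin l, x (i + (j : ℕ)) = w j)).card : ℝ)
    / ((n - l + 1 : ℕ) : ℝ)

/-- sliding block entropy `H_l(x_0^{n-1})`. -/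
noncomputable def slidingH (x : Cantor) (n l : ℕ) : ℝ :=
  (1 / (l : ℝ)) * ∑ w : Fin l → Bool, negMulLog2 (slidingP x n l w)

/-- disjoint block probability `P^d`. -/
noncomputable def disjP (x : Cantor) (n l : ℕ) (w : Fin l → Bool) : ℝ :=
  (((Finset.range (n / l)).filter (fun i => ∀ j : Fin l, x (l * i + (j : ℕ)) = w j)).card : ℝ)
    / ((n / l : ℕ) : ℝ)

/-- disjoint block entropy `H^d_l(x_0^{n-1})`. -/
noncomputable def disjH (x : Cantor) (n l : ℕ) : ℝ :=
  (1 / (l : ℝ)) * ∑ w : Fin l → Bool, negMulLog2 (disjP x n l w)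

/-- finite-state dimension via sliding block entropies. -/
noncomputable def dimFS (x : Cantor) : ℝ :=
  ⨅ l : ℕ, Filter.liminf (fun n => slidingH x n (l + 1)) Filter.atTop

/-- finite-state strong dimension. -/
noncomputable def DimFS (x : Cantor) : ℝ :=
  ⨅ l : ℕ, Filter.limsup (fun n => slidingH x n (l + 1)) Filter.atTop

/-- cylinder set. -/
def Cyl (l : ℕ) (w : Fin l → Bool) : Set Cantor := {y | ∀ j : Fin l, y (j : ℕ) = w j}

/-- empirical measures `ν_n = n⁻¹ ∑_{j<n} δ_{T^j x}` on Cantor space. -/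
noncomputable def empMeas (x : Cantor) (n : ℕ) : Measure Cantor :=
  (n : ℝ≥0∞)⁻¹ • ∑ j ∈ Finset.range n, Measure.dirac (shiftk x j)

/-- weak convergence of a sequence of measures. -/
def WeakConv {α : Type*} [TopologicalSpace α] [MeasurableSpace α]
    (ν : ℕ → Measure α) (μ : Measure α) : Prop :=
  ∀ f : BoundedContinuousFunction α ℂ,
    Tendsto (fun n => ∫ y, f y ∂(ν n)) atTop (nhds (∫ y, f y ∂μ))

/-- block entropy `H_n(μ)` of a measure on Cantor space. -/
noncomputable def measH (μ : Measure Cantor) (n : ℕ) : ℝ :=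
  ∑ w : Fin n → Bool, negMulLog2 ((μ (Cyl n w)).toReal)

/-- lower average entropy. -/
noncomputable def Hminus (μ : Measure Cantor) : ℝ :=
  Filter.liminf (fun n => measH μ n / n) Filter.atTop

/-- upper average entropy. -/
noncomputable def Hplus (μ : Measure Cantor) : ℝ :=
  Filter.limsup (fun n => measH μ n / n) Filter.atTop

/-- set of subsequence weak limits of the empirical measures of `x`. -/
def Wx (x : Cantor) : Set (Measure Cantor) :=
  {μ | IsProbabilityMeasure μ ∧
      ∃ φ : ℕ → ℕ, StrictMono φ ∧ (∀ m, 0 < φ m) ∧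
        WeakConv (fun m => empMeas x (φ m)) μ}

/-- normality of a binary sequence. -/
def IsNormal (x : Cantor) : Prop :=
  ∀ (l : ℕ) (w : Fin l → Bool),
    Tendsto (fun n => slidingP x n l w) atTop (nhds (((2:ℝ) ^ l)⁻¹))

/-- Weyl averages `(1/n) ∑_{j<n} e^{2πik v(T^j x)}`. -/
noncomputable def weylAvg (x : Cantor) (k : ℤ) (n : ℕ) : ℂ :=
  (n : ℂ)⁻¹ * ∑ j ∈ Finset.range n,
    Complex.exp (2 * (Real.pi : ℂ) * Complex.I * (k : ℂ) * ((eval (shiftk x j) : ℝ) : ℂ))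

/-- Weyl averages on the torus, `(1/n) ∑_{j<n} e^{2πik 2^j r}`. -/
noncomputable def weylAvgT (r : ℝ) (k : ℤ) (n : ℕ) : ℂ :=
  (n : ℂ)⁻¹ * ∑ j ∈ Finset.range n,
    Complex.exp (2 * (Real.pi : ℂ) * Complex.I * (k : ℂ) * (((2:ℝ) ^ j * r : ℝ) : ℂ))

/-- empirical measures `(1/n) ∑_{j<n} δ_{2^j r mod 1}` on the torus. -/
noncomputable def empMeasT (r : ℝ) (n : ℕ) : Measure UnitAddCircle :=
  (n : ℝ≥0∞)⁻¹ • ∑ j ∈ Finset.range n, Measure.dirac (((2:ℝ) ^ j * r : ℝ) : UnitAddCircle)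

/-- dyadic interval `[j/2^k, (j+1)/2^k)` on the torus. -/
def dyadicI (k j : ℕ) : Set UnitAddCircle :=
  (fun t : ℝ => (t : UnitAddCircle)) '' Set.Ico ((j : ℝ) / 2 ^ k) (((j : ℝ) + 1) / 2 ^ k)

/-- a real number is a dyadic rational. -/
def IsDyadic (t : ℝ) : Prop := ∃ (a : ℤ) (n : ℕ), t = (a : ℝ) / 2 ^ n

/-- value of a finite binary word. -/
noncomputable def val2 (l : ℕ) (w : Fin l → Bool) : ℝ :=
  ∑ j : Fin l, if w j then ((2:ℝ) ^ ((j : ℕ) + 1))⁻¹ else 0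

/-- dyadic interval `I_w` on the torus. -/
def IwT (l : ℕ) (w : Fin l → Bool) : Set UnitAddCircle :=
  (fun t : ℝ => (t : UnitAddCircle)) '' Set.Ico (val2 l w) (val2 l w + ((2:ℝ) ^ l)⁻¹)

/-- value of a finite base-`m` word. -/
noncomputable def valm (m n : ℕ) (w : Fin n → Fin m) : ℝ :=
  ∑ j : Fin n, ((w j : ℕ) : ℝ) / (m : ℝ) ^ ((j : ℕ) + 1)

/-- base-`m` interval `I^m_w` on the torus. -/
def ImT (m n : ℕ) (w : Fin n → Fin m) : Set UnitAddCircle :=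
  (fun t : ℝ => (t : UnitAddCircle)) '' Set.Ico (valm m n w) (valm m n w + ((m : ℝ) ^ n)⁻¹)

/-- base-`m` partition entropy `H^m_n(μ)` (natural logarithm). -/
noncomputable def measHT (μ : Measure UnitAddCircle) (m n : ℕ) : ℝ :=
  ∑ w : Fin n → Fin m, Real.negMulLog ((μ (ImT m n w)).toReal)

/-- lower Rényi dimension w.r.t. partition factor `m`. -/
noncomputable def renyiLower (μ : Measure UnitAddCircle) (m : ℕ) : ℝ :=
  Filter.liminf (fun n => measHT μ m n / (n * Real.log m)) Filter.atTop

/-- upper Rényi dimension w.r.t. partition factor `m`. -/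
noncomputable def renyiUpper (μ : Measure UnitAddCircle) (m : ℕ) : ℝ :=
  Filter.limsup (fun n => measHT μ m n / (n * Real.log m)) Filter.atTop

open Finset

lemma negMulLog2_eq_negMulLog_div (p : ℝ) : negMulLog2 p = Real.negMulLog p / Real.log 2 := by
  rw [negMulLog2, Real.negMulLog, Real.logb]
  ring

lemma continuous_negMulLog2 : Continuous negMulLog2 := by
  simp only [funext negMulLog2_eq_negMulLog_div]
  fun_prop

lemma negMulLog2_nonneg {p : ℝ} (h0 : 0 ≤ p) (h1 : p ≤ 1) : 0 ≤ negMulLog2 p := by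
  rw [negMulLog2_eq_negMulLog_div]
  exact div_nonneg (Real.negMulLog_nonneg h0 h1) (Real.log_nonneg one_le_two)

lemma negMulLog2_le_inv_log_two {p : ℝ} (h0 : 0 ≤ p) : negMulLog2 p ≤ (Real.log 2)⁻¹ := by
  rw [negMulLog2_eq_negMulLog_div, div_eq_mul_inv]
  refine mul_le_of_le_one_left (inv_nonneg.2 (Real.log_nonneg one_le_two)) ?_
  linarith [Real.negMulLog_le_one_sub_self h0]

lemma slidingP_nonneg (x : Cantor) (n l : ℕ) (w : Fin l → Bool) : 0 ≤ slidingP x n l w := by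
  unfold slidingP
  positivity

lemma slidingP_le_one (x : Cantor) (n l : ℕ) (w : Fin l → Bool) : slidingP x n l w ≤ 1 := by
  rw [slidingP, div_le_one (by positivity)]
  exact_mod_cast (card_filter_le _ _).trans (card_range _).le

lemma slidingH_nonneg (x : Cantor) (n l : ℕ) : 0 ≤ slidingH x n l :=
  mul_nonneg (by positivity) <| sum_nonneg fun w _ =>
    negMulLog2_nonneg (slidingP_nonneg x n l w) (slidingP_le_one x n l w)

lemma slidingH_le (x : Cantor) (n l : ℕ) : slidingH x n l ≤ 2 ^ l * (Real.log 2)⁻¹ := by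
  have hsum : ∑ w : Fin l → Bool, negMulLog2 (slidingP x n l w) ≤ 2 ^ l * (Real.log 2)⁻¹ := by
    simpa using sum_le_sum fun w (_ : w ∈ univ) => negMulLog2_le_inv_log_two (slidingP_nonneg x n l w)
  have hl : 1 / (l : ℝ) ≤ 1 := by
    rcases Nat.eq_zero_or_pos l with rfl | hl
    · simp
    · exact div_le_one_of_le₀ (by exact_mod_cast hl) (by positivity)
  refine (mul_le_of_le_one_left ?_ hl).trans hsum
  exact sum_nonneg fun w _ => negMulLog2_nonneg (slidingP_nonneg x n l w) (slidingP_le_one x n l w)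

lemma isBoundedUnder_ge_slidingH (x : Cantor) (l : ℕ) :
    IsBoundedUnder (· ≥ ·) atTop (fun n => slidingH x n l) :=
  isBoundedUnder_of ⟨0, (slidingH_nonneg x · l)⟩

lemma isBoundedUnder_le_slidingH (x : Cantor) (l : ℕ) :
    IsBoundedUnder (· ≤ ·) atTop (fun n => slidingH x n l) :=
  isBoundedUnder_of ⟨_, (slidingH_le x · l)⟩

lemma liminf_slidingH_nonneg (x : Cantor) (l : ℕ) :
    0 ≤ liminf (fun n => slidingH x n l) atTop :=
  le_liminf_of_le (isBoundedUnder_le_slidingH x l).isCoboundedUnder_ge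
    (Eventually.of_forall (slidingH_nonneg x · l))

lemma measH_nonneg (μ : Measure Cantor) [IsProbabilityMeasure μ] (l : ℕ) : 0 ≤ measH μ l :=
  sum_nonneg fun _ _ => negMulLog2_nonneg ENNReal.toReal_nonneg
    (ENNReal.toReal_le_of_le_ofReal zero_le_one (by simpa using prob_le_one))

lemma card_filter_range_le_add (P : ℕ → Prop) [DecidablePred P] (M K : ℕ) :
    #{i ∈ range K | P i} ≤ #{i ∈ range M | P i} + (K - M) := by
  have hsub : range K ⊆ range M ∪ Ico M K := by
    intro i
    simp only [mem_union, mem_range, mem_Ico]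
    omega
  calc #{i ∈ range K | P i} ≤ #{i ∈ range M ∪ Ico M K | P i} := card_le_card (filter_subset_filter _ hsub)
    _ ≤ #{i ∈ range M | P i} + #{i ∈ Ico M K | P i} := by
      rw [filter_union]; exact card_union_le _ _
    _ ≤ #{i ∈ range M | P i} + (K - M) :=
      Nat.add_le_add_left ((card_filter_le _ _).trans (Nat.card_Ico M K).le) _

lemma abs_card_filter_range_sub_le (P : ℕ → Prop) [DecidablePred P] (M K : ℕ) :
    |(#{i ∈ range M | P i} : ℝ) - #{i ∈ range K | P i}| ≤ |(M : ℝ) - K| := by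
  have h₁ : (#{i ∈ range K | P i} : ℝ) ≤ #{i ∈ range M | P i} + ((K - M : ℕ) : ℝ) := by
    exact_mod_cast card_filter_range_le_add P M K
  have h₂ : (#{i ∈ range M | P i} : ℝ) ≤ #{i ∈ range K | P i} + ((M - K : ℕ) : ℝ) := by
    exact_mod_cast card_filter_range_le_add P K M
  rw [abs_sub_le_iff]
  rcases le_total M K with h | h
  · rw [Nat.sub_eq_zero_of_le h, Nat.cast_zero, add_zero] at h₂
    rw [Nat.cast_sub h] at h₁
    constructor <;> linarith [neg_abs_le ((M : ℝ) - K), neg_le_abs ((M : ℝ) - K)]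
  · rw [Nat.sub_eq_zero_of_le h, Nat.cast_zero, add_zero] at h₁
    rw [Nat.cast_sub h] at h₂
    constructor <;> linarith [le_abs_self ((M : ℝ) - K)]

lemma abs_div_sub_div_le {a b M K d : ℝ} (hM : 0 < M) (hK : 0 < K) (ha : 0 ≤ a) (haM : a ≤ M)
    (hab : |a - b| ≤ d) (hMK : |M - K| ≤ d) : |a / M - b / K| ≤ 2 * d / K := by
  have hsplit : a / M - b / K = a / M * ((K - M) / K) + (a - b) / K := by
    field_simp
    ring
  have haM' : |a / M| ≤ 1 := by
    rw [abs_of_nonneg (by positivity)]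
    exact div_le_one_of_le₀ haM hM.le
  rw [hsplit, two_mul, add_div]
  refine (abs_add_le _ _).trans (add_le_add ?_ ?_)
  · rw [abs_mul]
    refine (mul_le_of_le_one_left (abs_nonneg _) haM').trans ?_
    rw [abs_div, abs_of_pos hK, abs_sub_comm]
    exact div_le_div_of_nonneg_right hMK hK.le
  · rw [abs_div, abs_of_pos hK]
    exact div_le_div_of_nonneg_right hab hK.le

lemma isClopen_cyl (l : ℕ) (w : Fin l → Bool) : IsClopen (Cyl l w) := by
  have : Cyl l w = ⋂ j : Fin l, (fun y : Cantor => y j) ⁻¹' {w j} := by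
    ext y
    simp [Cyl]
  rw [this]
  exact isClopen_iInter_of_finite fun j => (isClopen_discrete _).preimage (continuous_apply _)

lemma empMeas_cyl_toReal (x : Cantor) (n l : ℕ) (w : Fin l → Bool) :
    (empMeas x n (Cyl l w)).toReal = #{i ∈ range n | ∀ j : Fin l, x (i + j) = w j} / n := by
  have hmem (i : ℕ) : shiftk x i ∈ Cyl l w ↔ ∀ j : Fin l, x (i + j) = w j := by
    simp [Cyl, shiftk, Nat.add_comm]
  classical
  simp only [empMeas, Measure.smul_apply, Measure.coe_finsetSum, Finset.sum_apply, smul_eq_mul,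
    Measure.dirac_apply' _ (isClopen_cyl l w).isOpen.measurableSet, Set.indicator_apply, hmem, Pi.one_apply]
  rw [sum_boole]
  simp [div_eq_inv_mul]

lemma isProbabilityMeasure_empMeas (x : Cantor) {n : ℕ} (hn : n ≠ 0) :
    IsProbabilityMeasure (empMeas x n) := by
  constructor
  simp [empMeas, ENNReal.inv_mul_cancel (Nat.cast_ne_zero.2 hn)]

lemma tendsto_slidingP_sub_empMeas_cyl (x : Cantor) (l : ℕ) (w : Fin l → Bool) :
    Tendsto (fun n => slidingP x n l w - (empMeas x n (Cyl l w)).toReal) atTop (𝓝 0) := by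
  refine squeeze_zero_norm' ?_ (tendsto_const_div_atTop_nhds_zero_nat (2 * (l + 1 : ℝ)))
  filter_upwards [eventually_gt_atTop 0] with n hn
  rw [slidingP, empMeas_cyl_toReal, Real.norm_eq_abs]
  have hgap : |((n - l + 1 : ℕ) : ℝ) - n| ≤ l + 1 := by
    rw [abs_le]
    constructor <;> rcases le_total l n with h | h <;>
      push_cast [Nat.cast_sub h, Nat.sub_eq_zero_of_le h] <;> linarith [(Nat.cast_le (α := ℝ)).2 h]
  refine abs_div_sub_div_le (by positivity) (by exact_mod_cast hn) (by positivity) ?_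
    ((abs_card_filter_range_sub_le _ _ _).trans hgap) hgap
  exact_mod_cast (card_filter_le _ _).trans (card_range _).le

lemma weakConv_iff_tendsto {X : Type*} [TopologicalSpace X] [MeasurableSpace X]
    [OpensMeasurableSpace X] {ν : ℕ → ProbabilityMeasure X} {μ : ProbabilityMeasure X} :
    WeakConv (fun n => (ν n : Measure X)) μ ↔ Tendsto ν atTop (𝓝 μ) :=
  (ProbabilityMeasure.tendsto_iff_forall_integral_rclike_tendsto ℂ).symm

lemma tendsto_measure_of_weakConv_of_isClopen {X : Type*} [TopologicalSpace X]
    [MeasurableSpace X] [OpensMeasurableSpace X] [HasOuterApproxClosed X]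
    {ν : ℕ → Measure X} {μ : Measure X} (hν : ∀ n, IsProbabilityMeasure (ν n))
    [IsProbabilityMeasure μ] (h : WeakConv ν μ) {E : Set X} (hE : IsClopen E) :
    Tendsto (fun n => (ν n E).toReal) atTop (𝓝 (μ E).toReal) := by
  let νP : ℕ → ProbabilityMeasure X := fun n => ⟨ν n, hν n⟩
  have := ProbabilityMeasure.tendsto_measure_of_isClopen_of_tendsto
    (weakConv_iff_tendsto (ν := νP) (μ := ⟨μ, ‹_›⟩) |>.1 h) hE
  exact (NNReal.continuous_coe.tendsto _).comp this

lemma exists_weakConv_subseq {X : Type*} [TopologicalSpace X] [CompactSpace X]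
    [TopologicalSpace.MetrizableSpace X] [MeasurableSpace X] [BorelSpace X]
    {ν : ℕ → Measure X} (hν : ∀ n, IsProbabilityMeasure (ν n)) :
    ∃ μ, IsProbabilityMeasure μ ∧ ∃ ψ : ℕ → ℕ, StrictMono ψ ∧ WeakConv (fun m => ν (ψ m)) μ := by
  let νP : ℕ → ProbabilityMeasure X := fun n => ⟨ν n, hν n⟩
  obtain ⟨μ, ψ, hψ, hlim⟩ := CompactSpace.tendsto_subseq νP
  exact ⟨μ, inferInstance, ψ, hψ, weakConv_iff_tendsto.2 hlim⟩

lemma tendsto_slidingH_of_weakConv {x : Cantor} {φ : ℕ → ℕ} (hφ : StrictMono φ)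
    (hφ₀ : ∀ m, 0 < φ m) {μ : Measure Cantor} [IsProbabilityMeasure μ]
    (h : WeakConv (fun m => empMeas x (φ m)) μ) (l : ℕ) :
    Tendsto (fun m => slidingH x (φ m) l) atTop (𝓝 (measH μ l / l)) := by
  have hP (w : Fin l → Bool) :
      Tendsto (fun m => slidingP x (φ m) l w) atTop (𝓝 (μ (Cyl l w)).toReal) := by
    have hemp := tendsto_measure_of_weakConv_of_isClopen
      (fun m => isProbabilityMeasure_empMeas x (hφ₀ m).ne') h (isClopen_cyl l w)
    simpa using ((tendsto_slidingP_sub_empMeas_cyl x l w).comp hφ.tendsto_atTop).add hemp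
  rw [measH, div_eq_inv_mul, ← one_div]
  exact (tendsto_finsetSum _ fun w _ => (continuous_negMulLog2.tendsto _).comp (hP w)).const_mul _

lemma liminf_slidingH_le_of_mem_Wx {x : Cantor} {μ : Measure Cantor} (hμ : μ ∈ Wx x) (l : ℕ) :
    liminf (fun n => slidingH x n l) atTop ≤ measH μ l / l := by
  obtain ⟨hμ, φ, hφ, hφ₀, hconv⟩ := hμ
  exact (MapClusterPt.of_comp hφ.tendsto_atTop
    (tendsto_slidingH_of_weakConv hφ hφ₀ hconv l).mapClusterPt).liminf_le
    (isBoundedUnder_ge_slidingH x l)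

lemma exists_mem_Wx_measH_div_eq_liminf (x : Cantor) (l : ℕ) :
    ∃ μ ∈ Wx x, measH μ l / l = liminf (fun n => slidingH x n l) atTop := by
  obtain ⟨φ, hφ, hlim⟩ := (MapClusterPt.liminf (isBoundedUnder_le_slidingH x l).isCoboundedUnder_ge
    (isBoundedUnder_ge_slidingH x l)).tendsto_subseq
  -- shifting the index keeps the empirical measures away from the junk value `empMeas x 0 = 0`
  have hφ₀ (m : ℕ) : 0 < φ (m + 1) := (Nat.zero_le _).trans_lt (hφ m.lt_succ_self)
  obtain ⟨μ, hμ, ψ, hψ, hconv⟩ :=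
    exists_weakConv_subseq fun m => isProbabilityMeasure_empMeas x (hφ₀ m).ne'
  have hφψ : StrictMono fun m => φ (ψ m + 1) := hφ.comp ((strictMono_id.add_const 1).comp hψ)
  refine ⟨μ, ⟨hμ, _, hφψ, fun m => hφ₀ (ψ m), hconv⟩, tendsto_nhds_unique
    (tendsto_slidingH_of_weakConv hφψ (fun m => hφ₀ (ψ m)) hconv l) ?_⟩
  exact hlim.comp ((tendsto_add_atTop_nat 1).comp hψ.tendsto_atTop)

/-- the liminf in the lower average entropy can be replaced by an infimum. -/
theorem dimFS_eq_inf_inf_measH (x : Cantor) :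
    dimFS x = sInf {v : ℝ | ∃ μ ∈ Wx x, ∃ l : ℕ, v = measH μ (l + 1) / (l + 1)} := by
  have hcast (l : ℕ) : ((l + 1 : ℕ) : ℝ) = l + 1 := by push_cast; rfl
  have hbdd : BddBelow {v : ℝ | ∃ μ ∈ Wx x, ∃ l : ℕ, v = measH μ (l + 1) / (l + 1)} := by
    refine ⟨0, ?_⟩
    rintro v ⟨μ, ⟨hμ, -⟩, l, rfl⟩
    have := measH_nonneg μ (l + 1)
    positivity
  apply le_antisymm
  · obtain ⟨μ, hμ, -⟩ := exists_mem_Wx_measH_div_eq_liminf x 1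
    refine le_csInf ⟨_, μ, hμ, 0, rfl⟩ ?_
    rintro v ⟨μ, hμ, l, rfl⟩
    calc dimFS x ≤ liminf (fun n => slidingH x n (l + 1)) atTop :=
          ciInf_le ⟨0, Set.forall_mem_range.2 fun l => liminf_slidingH_nonneg x (l + 1)⟩ l
      _ ≤ measH μ (l + 1) / (l + 1) := hcast l ▸ liminf_slidingH_le_of_mem_Wx hμ (l + 1)
  · refine le_ciInf fun l => ?_
    obtain ⟨μ, hμ, heq⟩ := exists_mem_Wx_measH_div_eq_liminf x (l + 1)
    exact (csInf_le hbdd ⟨μ, hμ, l, rfl⟩).trans_eq (by rwa [hcast] at heq)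

end
end

section
/- Let μ and μ' be Borel probability measures on the torus, m₁, m₂ ≥ 2 partition factors, and l, n positive integers with m₁^n ≤ m₂^l < m₁^{n+1}. Then |H^{m₂}_l(μ')/(l log m₂) − H^{m₁}_n(μ')/(n log m₁)| ≤ 2/n. -/
open MeasureTheory Filter Topology Real
open scoped ENNReal

noncomputable section

/-! The base-`m` intervals of depth `n` are the cells `[k/N, (k+1)/N)` of the uniform grid with
`N = m^n` cells, so `H^m_n` is the entropy of the grid index `x ↦ ⌊N x⌋`. Since
`m₁^n ≤ m₂^l ≤ m₁ · m₁^n`, every cell of either grid meets at most `m₁ + 1` cells of the other, and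
`H(g) ≤ H(f) + H(g | f)` makes the two entropies differ by at most `log (m₁ + 1) ≤ 2 log m₁`.
The normalisations `n log m₁ ≤ l log m₂ ≤ (n + 1) log m₁` differ by at most `log m₁`, and dividing
through by `n log m₁` gives `2 / n`. -/

open Finset

namespace Real

theorem negMulLog_sum_le_sum_negMulLog {ι : Type*} (s : Finset ι) {f : ι → ℝ}
    (hf : ∀ i ∈ s, 0 ≤ f i) : negMulLog (∑ i ∈ s, f i) ≤ ∑ i ∈ s, negMulLog (f i) := by
  rw [negMulLog, neg_mul, sum_mul, ← sum_neg_distrib]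
  refine sum_le_sum fun i hi => ?_
  rcases (hf i hi).eq_or_lt with h0 | hpos
  · simp [← h0]
  · have := log_le_log hpos (single_le_sum hf hi)
    rw [negMulLog]
    nlinarith

theorem sum_negMulLog_le_negMulLog_sum_add_mul_log_card {ι : Type*} (s : Finset ι) {f : ι → ℝ}
    (hf : ∀ i ∈ s, 0 ≤ f i) :
    ∑ i ∈ s, negMulLog (f i) ≤ negMulLog (∑ i ∈ s, f i) + (∑ i ∈ s, f i) * log #s := by
  rcases s.eq_empty_or_nonempty with rfl | hs
  · simp
  have hk : (0 : ℝ) < #s := by exact_mod_cast hs.card_pos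
  have jensen := concaveOn_negMulLog.le_map_sum (t := s) (w := fun _ => (#s : ℝ)⁻¹) (p := f)
    (fun _ _ => by positivity) (by simp [hk.ne']) hf
  simp only [smul_eq_mul, ← mul_sum] at jensen
  rw [mul_comm, negMulLog_mul, negMulLog, log_inv] at jensen
  have := mul_le_mul_of_nonneg_left jensen hk.le
  field_simp at this
  linarith

end Real

section FiberEntropy

variable {α ι κ : Type*} [MeasurableSpace α] [Fintype ι] [Fintype κ]

def fiberEntropy (μ : Measure α) (f : α → ι) : ℝ :=
  ∑ i, negMulLog (μ.real (f ⁻¹' {i}))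

theorem fiberEntropy_nonneg (μ : Measure α) [IsProbabilityMeasure μ] (f : α → ι) :
    0 ≤ fiberEntropy μ f :=
  sum_nonneg fun _ _ => negMulLog_nonneg measureReal_nonneg measureReal_le_one

theorem fiberEntropy_le_log_card (μ : Measure α) [IsProbabilityMeasure μ] {f : α → ι}
    (hf : ∀ i, MeasurableSet (f ⁻¹' {i})) : fiberEntropy μ f ≤ log (Fintype.card ι) := by
  have h := sum_negMulLog_le_negMulLog_sum_add_mul_log_card (univ : Finset ι)
    (f := fun i => μ.real (f ⁻¹' {i})) (fun _ _ => measureReal_nonneg)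
  rwa [sum_measureReal_preimage_singleton _ fun i _ => hf i, coe_univ, Set.preimage_univ,
    probReal_univ, negMulLog_one, one_mul, zero_add, card_univ] at h

theorem sum_measureReal_inter_preimage_singleton (μ : Measure α) [IsFiniteMeasure μ]
    {f : α → ι} (hf : ∀ i, MeasurableSet (f ⁻¹' {i})) (s : Set α) :
    ∑ i, μ.real (s ∩ f ⁻¹' {i}) = μ.real s := by
  have h := sum_measureReal_preimage_singleton (μ := μ.restrict s) univ fun i _ => hf i
  simpa [measureReal_restrict_apply (hf _), Set.inter_comm] using h

/-- `H(g) ≤ H(f, g) = H(f) + H(g | f)`, and `H(g | f) ≤ log K` because on each fiber of `f`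
the map `g` takes at most `K` values. -/
theorem fiberEntropy_le_add_mul_log (μ : Measure α) [IsFiniteMeasure μ] {f : α → ι} {g : α → κ}
    (hf : ∀ i, MeasurableSet (f ⁻¹' {i})) (hg : ∀ j, MeasurableSet (g ⁻¹' {j})) {K : ℕ}
    (hK : ∀ i, ∃ s : Finset κ, #s ≤ K ∧ ∀ x, f x = i → g x ∈ s) :
    fiberEntropy μ g ≤ fiberEntropy μ f + μ.real Set.univ * log K := by
  set r : ι → κ → ℝ := fun i j => μ.real (f ⁻¹' {i} ∩ g ⁻¹' {j})
  have hrow (i : ι) : ∑ j, r i j = μ.real (f ⁻¹' {i}) :=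
    sum_measureReal_inter_preimage_singleton μ hg _
  have hcol (j : κ) : ∑ i, r i j = μ.real (g ⁻¹' {j}) := by
    simp_rw [r, Set.inter_comm (f ⁻¹' _)]
    exact sum_measureReal_inter_preimage_singleton μ hf _
  have hrow_entropy (i : ι) :
      ∑ j, negMulLog (r i j) ≤ negMulLog (μ.real (f ⁻¹' {i})) + μ.real (f ⁻¹' {i}) * log K := by
    obtain ⟨s, hsK, hs⟩ := hK i
    have hsupp (j : κ) (hj : j ∉ s) : r i j = 0 := by
      have hempty : f ⁻¹' {i} ∩ g ⁻¹' {j} = ∅ := Set.eq_empty_of_forall_notMem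
        fun x ⟨hx, hgx⟩ => hj (Set.mem_singleton_iff.mp hgx ▸ hs x hx)
      simp only [r, hempty, measureReal_empty]
    have hrow_s : ∑ j ∈ s, r i j = μ.real (f ⁻¹' {i}) := by
      rw [← hrow, sum_subset (subset_univ s) fun j _ hj => hsupp j hj]
    have hlog : log #s ≤ log K := by
      rcases (#s).eq_zero_or_pos with h0 | hpos
      · simpa [h0] using log_natCast_nonneg K
      · exact log_le_log (by exact_mod_cast hpos) (by exact_mod_cast hsK)
    calc ∑ j, negMulLog (r i j) = ∑ j ∈ s, negMulLog (r i j) :=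
          (sum_subset (subset_univ s) fun j _ hj => by rw [hsupp j hj, negMulLog_zero]).symm
      _ ≤ negMulLog (μ.real (f ⁻¹' {i})) + μ.real (f ⁻¹' {i}) * log #s := by
          rw [← hrow_s]
          exact sum_negMulLog_le_negMulLog_sum_add_mul_log_card s fun _ _ => measureReal_nonneg
      _ ≤ _ := by gcongr
  calc fiberEntropy μ g = ∑ j, negMulLog (∑ i, r i j) := by simp only [fiberEntropy, hcol]
    _ ≤ ∑ j, ∑ i, negMulLog (r i j) :=
      sum_le_sum fun j _ => negMulLog_sum_le_sum_negMulLog _ fun _ _ => measureReal_nonneg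
    _ = ∑ i, ∑ j, negMulLog (r i j) := sum_comm
    _ ≤ ∑ i, (negMulLog (μ.real (f ⁻¹' {i})) + μ.real (f ⁻¹' {i}) * log K) :=
      sum_le_sum fun i _ => hrow_entropy i
    _ = fiberEntropy μ f + μ.real Set.univ * log K := by
      rw [sum_add_distrib, ← sum_mul, fiberEntropy,
        sum_measureReal_preimage_singleton _ fun i _ => hf i, coe_univ, Set.preimage_univ]

end FiberEntropy

theorem AddCircle.coe_image_eq_preimage_equivIco {𝕜 : Type*} [AddCommGroup 𝕜] [LinearOrder 𝕜]
    [IsOrderedAddMonoid 𝕜] [Archimedean 𝕜] {p : 𝕜} [Fact (0 < p)] (a : 𝕜) {S : Set 𝕜}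
    (hS : S ⊆ Set.Ico a (a + p)) :
    ((↑) : 𝕜 → AddCircle p) '' S = (fun x => (equivIco p a x : 𝕜)) ⁻¹' S := by
  ext x
  constructor
  · rintro ⟨t, ht, rfl⟩
    simpa [Set.mem_preimage, equivIco_coe_of_mem (hS ht)] using ht
  · exact fun hx => ⟨_, hx, coe_equivIco⟩

theorem Nat.floor_mul_mem_Icc {N₁ N₂ c i : ℕ} (hN₁ : 0 < N₁) (hc : N₂ ≤ c * N₁) {t : ℝ}
    (ht : 0 ≤ t) (hi : ⌊N₁ * t⌋₊ = i) :
    ⌊N₂ * t⌋₊ ∈ Icc ⌊(N₂ * i / N₁ : ℝ)⌋₊ (⌊(N₂ * i / N₁ : ℝ)⌋₊ + c) := by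
  have hN₁' : (0 : ℝ) < N₁ := by exact_mod_cast hN₁
  have hc' : (N₂ : ℝ) ≤ c * N₁ := by exact_mod_cast hc
  obtain ⟨hi₁, hi₂⟩ := (Nat.floor_eq_iff (by positivity)).mp hi
  rw [mem_Icc, ← Nat.floor_add_natCast (by positivity)]
  constructor <;> refine Nat.floor_le_floor ?_
  · rw [div_le_iff₀ hN₁']
    nlinarith [Nat.cast_nonneg (α := ℝ) N₂]
  · rw [div_add' _ _ _ hN₁'.ne', le_div_iff₀ hN₁']
    nlinarith [Nat.cast_nonneg (α := ℝ) N₂]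

noncomputable def gridIndex (N : ℕ) [NeZero N] (x : UnitAddCircle) : Fin N :=
  Fin.ofNat N ⌊N * (AddCircle.equivIco 1 0 x : ℝ)⌋₊

section GridIndex

variable {N : ℕ} [NeZero N]

theorem measurable_gridIndex : Measurable (gridIndex N) :=
  measurable_from_nat.comp <| Nat.measurable_floor.comp <| (measurable_const_mul _).comp <|
    measurable_subtype_coe.comp (AddCircle.measurableEquivIco (T := 1) 0).measurable

theorem floor_mul_equivIco_lt (x : UnitAddCircle) :
    ⌊N * (AddCircle.equivIco 1 0 x : ℝ)⌋₊ < N := by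
  have hN : (0 : ℝ) < N := by exact_mod_cast NeZero.pos N
  obtain ⟨h0, h1⟩ := (AddCircle.equivIco 1 0 x).2
  rw [Nat.floor_lt (by positivity)]
  nlinarith

theorem gridIndex_val (x : UnitAddCircle) :
    (gridIndex N x : ℕ) = ⌊N * (AddCircle.equivIco 1 0 x : ℝ)⌋₊ :=
  (Fin.val_ofNat _ _).trans (Nat.mod_eq_of_lt (floor_mul_equivIco_lt x))

theorem preimage_gridIndex_singleton (k : Fin N) :
    gridIndex N ⁻¹' {k} = ((↑) : ℝ → UnitAddCircle) '' Set.Ico (k / N) ((k + 1) / N) := by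
  have hN : (0 : ℝ) < N := by exact_mod_cast NeZero.pos N
  rw [AddCircle.coe_image_eq_preimage_equivIco 0]
  · ext x
    simp only [Set.mem_preimage, Set.mem_singleton_iff, Set.mem_Ico, Fin.ext_iff, gridIndex_val,
      Nat.floor_eq_iff (mul_nonneg hN.le (AddCircle.equivIco 1 0 x).2.1), div_le_iff₀' hN,
      lt_div_iff₀' hN]
  · intro t ⟨h0, h1⟩
    refine ⟨le_trans (by positivity) h0, h1.trans_le ?_⟩
    rw [div_le_iff₀ hN, zero_add, one_mul]
    exact_mod_cast k.isLt

theorem exists_finset_gridIndex_mem {N₁ N₂ c : ℕ} [NeZero N₁] [NeZero N₂] (hc : N₂ ≤ c * N₁)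
    (i : Fin N₁) :
    ∃ s : Finset (Fin N₂), #s ≤ c + 1 ∧ ∀ x, gridIndex N₁ x = i → gridIndex N₂ x ∈ s := by
  set a := ⌊(N₂ * i / N₁ : ℝ)⌋₊
  refine ⟨(Icc a (a + c)).image (Fin.ofNat N₂),
    card_image_le.trans (by rw [Nat.card_Icc]; omega), fun x hx => ?_⟩
  refine mem_image_of_mem _ (Nat.floor_mul_mem_Icc (NeZero.pos N₁) hc
    (AddCircle.equivIco 1 0 x).2.1 ?_)
  rw [← gridIndex_val, hx]

theorem fiberEntropy_gridIndex_le (μ : Measure UnitAddCircle) [IsProbabilityMeasure μ]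
    {N₁ N₂ c : ℕ} [NeZero N₁] [NeZero N₂] (hc : N₂ ≤ c * N₁) :
    fiberEntropy μ (gridIndex N₂) ≤ fiberEntropy μ (gridIndex N₁) + log (c + 1) := by
  have h := fiberEntropy_le_add_mul_log μ
    (fun _ => measurable_gridIndex (measurableSet_singleton _))
    (fun _ => measurable_gridIndex (measurableSet_singleton _)) (exists_finset_gridIndex_mem hc)
  simpa using h

end GridIndex

def wordEquiv (m n : ℕ) : (Fin n → Fin m) ≃ Fin (m ^ n) :=
  (Equiv.arrowCongr Fin.revPerm (Equiv.refl (Fin m))).trans finFunctionFinEquiv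

theorem valm_eq_wordEquiv_div {m n : ℕ} [NeZero m] (w : Fin n → Fin m) :
    valm m n w = (wordEquiv m n w : ℕ) / (m : ℝ) ^ n := by
  have hm : (m : ℝ) ≠ 0 := Nat.cast_ne_zero.mpr (NeZero.ne m)
  rw [wordEquiv, Equiv.trans_apply, finFunctionFinEquiv_apply, valm]
  push_cast
  rw [sum_div]
  refine Fintype.sum_equiv Fin.revPerm _ _ fun j => ?_
  have hpow : (m : ℝ) ^ n = m ^ ((j : ℕ) + 1) * m ^ (n - ((j : ℕ) + 1)) := by
    rw [← pow_add]; congr 1; omega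
  simp only [Equiv.arrowCongr_apply, Fin.revPerm_symm, Fin.revPerm_apply, Fin.rev_rev,
    Fin.val_rev, Equiv.coe_refl, Function.comp_apply, id]
  rw [hpow]
  field_simp

theorem ImT_eq_preimage_gridIndex {m n : ℕ} [NeZero m] (w : Fin n → Fin m) :
    ImT m n w = gridIndex (m ^ n) ⁻¹' {wordEquiv m n w} := by
  rw [preimage_gridIndex_singleton, ImT, valm_eq_wordEquiv_div, add_div, one_div]
  push_cast
  rfl

theorem measHT_eq_fiberEntropy (μ : Measure UnitAddCircle) (m n : ℕ) [NeZero m] :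
    measHT μ m n = fiberEntropy μ (gridIndex (m ^ n)) := by
  rw [measHT, fiberEntropy, ← (wordEquiv m n).sum_comp]
  simp only [ImT_eq_preimage_gridIndex, measureReal_def]

theorem abs_div_sub_div_le_s16 {A B L₁ L₂ δ : ℝ} (hL₁ : 0 < L₁) (hL : L₁ ≤ L₂) (hL' : L₂ ≤ L₁ + δ)
    (hB : 0 ≤ B) (hA : A ≤ L₂) (hAB : A ≤ B + 2 * δ) (hBA : B ≤ A + δ) :
    |A / L₂ - B / L₁| ≤ 2 * δ / L₁ := by
  have hL₂ : 0 < L₂ := hL₁.trans_le hL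
  rw [div_sub_div _ _ hL₂.ne' hL₁.ne', abs_div, abs_of_pos (mul_pos hL₂ hL₁),
    ← mul_div_mul_left (2 * δ) L₁ hL₂.ne', div_le_div_iff_of_pos_right (mul_pos hL₂ hL₁),
    abs_sub_le_iff]
  constructor
  · nlinarith [mul_le_mul_of_nonneg_left hL hB]
  · nlinarith [mul_le_mul_of_nonneg_right hA (sub_nonneg.2 hL)]

theorem renyi_base_comparison_general
    (μ' : Measure UnitAddCircle) (hμ' : IsProbabilityMeasure μ')
    (m₁ m₂ l n : ℕ) (h1 : 2 ≤ m₁) (h2 : 2 ≤ m₂) (hn : 0 < n)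
    (hle : m₁ ^ n ≤ m₂ ^ l) (hlt : m₂ ^ l < m₁ ^ (n + 1)) :
    |measHT μ' m₂ l / (l * Real.log m₂) - measHT μ' m₁ n / (n * Real.log m₁)| ≤ 2 / n := by
  have : NeZero m₁ := ⟨by omega⟩
  have : NeZero m₂ := ⟨by omega⟩
  have hm₁ : (2 : ℝ) ≤ m₁ := by exact_mod_cast h1
  have hlog₁ : 0 < log m₁ := log_pos (by linarith)
  have log_pow_cast (m k : ℕ) : log ((m ^ k : ℕ) : ℝ) = k * log m := by
    rw [Nat.cast_pow, log_pow]
  have hL : (n : ℝ) * log m₁ ≤ l * log m₂ := by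
    rw [← log_pow_cast, ← log_pow_cast]
    exact log_le_log (by positivity) (by exact_mod_cast hle)
  have hL' : (l : ℝ) * log m₂ ≤ n * log m₁ + log m₁ := by
    rw [← log_pow_cast, ← add_one_mul, ← Nat.cast_succ, ← log_pow_cast]
    exact log_le_log (by positivity) (by exact_mod_cast hlt.le)
  have hlog_succ : log (m₁ + 1) ≤ 2 * log m₁ := by
    rw [show 2 * log m₁ = log (m₁ ^ 2) by rw [log_pow]; norm_num]
    exact log_le_log (by positivity) (by nlinarith)
  have hlog_two : log (1 + 1) ≤ log m₁ := log_le_log (by norm_num) (by linarith)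
  have hH₂ := fiberEntropy_le_log_card μ' (f := gridIndex (m₂ ^ l))
    (fun _ => measurable_gridIndex (measurableSet_singleton _))
  rw [Fintype.card_fin, log_pow_cast] at hH₂
  have hH₂₁ := fiberEntropy_gridIndex_le μ' (N₁ := m₁ ^ n) (N₂ := m₂ ^ l) (c := m₁)
    (by rw [← pow_succ']; exact hlt.le)
  have hH₁₂ := fiberEntropy_gridIndex_le μ' (N₁ := m₂ ^ l) (N₂ := m₁ ^ n) (c := 1)
    (by rwa [one_mul])
  rw [measHT_eq_fiberEntropy, measHT_eq_fiberEntropy, ← mul_div_mul_right 2 _ hlog₁.ne']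
  exact abs_div_sub_div_le_s16 (by positivity) hL hL' (fiberEntropy_nonneg _ _) hH₂
    (by linarith) (by push_cast at hH₁₂; linarith)

/-- quantitative comparison of normalized partition entropies in two bases. -/
theorem renyi_base_comparison
    (μ' : Measure UnitAddCircle) (hμ' : IsProbabilityMeasure μ')
    (m₁ m₂ l n : ℕ) (h1 : 2 ≤ m₁) (h2 : 2 ≤ m₂) (hl : 0 < l) (hn : 0 < n)
    (hle : m₁ ^ n ≤ m₂ ^ l) (hlt : m₂ ^ l < m₁ ^ (n + 1)) :
    |measHT μ' m₂ l / (l * Real.log m₂) - measHT μ' m₁ n / (n * Real.log m₁)| ≤ 2 / n :=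
  renyi_base_comparison_general μ' hμ' m₁ m₂ l n h1 h2 hn hle hlt

end
end
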